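/- Finite termination of the basic ABS algorithm (deterministic case): let b ∈ ℝ^m, let x₁ ∈ ℝⁿ be arbitrary, and define x_{i+1} = x_i − α_i p_i with step size α_i = (a_iᵀ x_i − b_i)/(a_iᵀ p_i) for i = 1, …, m. Then for every 1 ≤ i ≤ m and every 1 ≤ l ≤ i one has a_lᵀ x_{i+1} = b_l; in particular x_{m+1} satisfies A x_{m+1} = b. -/

import Mathlib

/-!
Each Abaffian update `H ↦ H - (wᵀHa)⁻¹ (Ha)(wᵀH)` annihilates `a` and keeps every vector that
`H` already annihilates, so `H_i a_l = 0` for all `l < i`. Hence the search vector `p_i = H_iᵀ z_i`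
satisfies `a_lᵀ p_i = z_iᵀ H_i a_l = 0` for `l < i`, while `a_iᵀ p_i = z_iᵀ H_i a_i ≠ 0`: the matrix
`(a_lᵀ p_i)` is lower triangular with nonzero diagonal. The step `x_i ↦ x_{i+1}` along `p_i` then
solves equation `i` without disturbing equations `1, …, i - 1`.
-/

open Matrix

section Abaffian

variable {K ι : Type*} [Field K] [Fintype ι]

def abaffianUpdate (H : Matrix ι ι K) (a w : ι → K) : Matrix ι ι K :=
  H - (w ⬝ᵥ H *ᵥ a)⁻¹ • vecMulVec (H *ᵥ a) (w ᵥ* H)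

lemma abaffianUpdate_mulVec (H : Matrix ι ι K) (a w v : ι → K) :
    abaffianUpdate H a w *ᵥ v = H *ᵥ v - ((w ⬝ᵥ H *ᵥ v) / (w ⬝ᵥ H *ᵥ a)) • H *ᵥ a := by
  rw [abaffianUpdate, sub_mulVec, smul_mulVec, vecMulVec_mulVec, op_smul_eq_smul, smul_smul,
    ← dotProduct_mulVec, inv_mul_eq_div]

lemma abaffianUpdate_mulVec_self {H : Matrix ι ι K} {a w : ι → K} (h : w ⬝ᵥ H *ᵥ a ≠ 0) :
    abaffianUpdate H a w *ᵥ a = 0 := by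
  rw [abaffianUpdate_mulVec, div_self h, one_smul, sub_self]

lemma abaffianUpdate_mulVec_of_mulVec_eq_zero (H : Matrix ι ι K) (a w : ι → K) {v : ι → K}
    (h : H *ᵥ v = 0) : abaffianUpdate H a w *ᵥ v = 0 := by
  rw [abaffianUpdate_mulVec, h, dotProduct_zero, zero_div, zero_smul, sub_zero]

theorem abaffian_mulVec_eq_zero_of_lt (m : ℕ) (a w : ℕ → ι → K) (H : ℕ → Matrix ι ι K)
    (hw : ∀ i, 1 ≤ i → i ≤ m → w i ⬝ᵥ H i *ᵥ a i ≠ 0)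
    (hrec : ∀ i, 1 ≤ i → i ≤ m → H (i + 1) = abaffianUpdate (H i) (a i) (w i))
    {l j : ℕ} (hl : 1 ≤ l) (hlj : l < j) (hj : j ≤ m + 1) : H j *ᵥ a l = 0 := by
  induction j, hlj using Nat.le_induction with
  | base => rw [hrec l hl (by omega)]; exact abaffianUpdate_mulVec_self (hw l hl (by omega))
  | succ j hlj ih =>
    rw [hrec j (by omega) (by omega)]
    exact abaffianUpdate_mulVec_of_mulVec_eq_zero _ _ _ (ih (by omega))

lemma dotProduct_sub_div_smul_self {a p : ι → K} (x : ι → K) (β : K) (h : a ⬝ᵥ p ≠ 0) :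
    a ⬝ᵥ (x - ((a ⬝ᵥ x - β) / (a ⬝ᵥ p)) • p) = β := by
  rw [dotProduct_sub, dotProduct_smul, smul_eq_mul, div_mul_cancel₀ _ h, sub_sub_cancel]

lemma dotProduct_sub_smul_of_dotProduct_eq_zero {c p : ι → K} (x : ι → K) (t : K)
    (h : c ⬝ᵥ p = 0) : c ⬝ᵥ (x - t • p) = c ⬝ᵥ x := by
  rw [dotProduct_sub, dotProduct_smul, h, smul_zero, sub_zero]

theorem dotProduct_iterate_eq_of_lowerTriangular (m : ℕ) (a p x : ℕ → ι → K) (b : ℕ → K)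
    (horth : ∀ i l, 1 ≤ l → l < i → i ≤ m → a l ⬝ᵥ p i = 0)
    (hdiag : ∀ i, 1 ≤ i → i ≤ m → a i ⬝ᵥ p i ≠ 0)
    (hx : ∀ i, 1 ≤ i → i ≤ m → x (i + 1) = x i - ((a i ⬝ᵥ x i - b i) / (a i ⬝ᵥ p i)) • p i) :
    ∀ i l, 1 ≤ l → l ≤ i → i ≤ m → a l ⬝ᵥ x (i + 1) = b l := by
  intro i
  induction i with
  | zero => intro l hl hli; omega
  | succ i ih =>
    intro l hl hli hi
    rw [hx (i + 1) (by omega) hi]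
    rcases hli.lt_or_eq with hlt | rfl
    · rw [dotProduct_sub_smul_of_dotProduct_eq_zero _ _ (horth (i + 1) l hl hlt hi)]
      exact ih l hl (by omega) (by omega)
    · exact dotProduct_sub_div_smul_self _ _ (hdiag _ hl hi)

end Abaffian

theorem abs_finite_termination_general
    (m n : ℕ)
    (a z w p : ℕ → (Fin n → ℝ))
    (H : ℕ → Matrix (Fin n) (Fin n) ℝ)
    (hz : ∀ i, 1 ≤ i → i ≤ m → z i ⬝ᵥ (H i).mulVec (a i) ≠ 0)
    (hw : ∀ i, 1 ≤ i → i ≤ m → w i ⬝ᵥ (H i).mulVec (a i) ≠ 0)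
    (hrec : ∀ i, 1 ≤ i → i ≤ m →
      H (i + 1) = H i - (w i ⬝ᵥ (H i).mulVec (a i))⁻¹ •
        Matrix.vecMulVec ((H i).mulVec (a i)) (Matrix.vecMul (w i) (H i)))
    (hp : ∀ i, 1 ≤ i → i ≤ m → p i = Matrix.mulVec (H i)ᵀ (z i))
    (b : ℕ → ℝ) (x : ℕ → (Fin n → ℝ))
    (hx : ∀ i, 1 ≤ i → i ≤ m →
      x (i + 1) = x i - ((a i ⬝ᵥ x i - b i) / (a i ⬝ᵥ p i)) • p i) :
    (∀ i l, 1 ≤ l → l ≤ i → i ≤ m → a l ⬝ᵥ x (i + 1) = b l) ∧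
    (∀ l, 1 ≤ l → l ≤ m → a l ⬝ᵥ x (m + 1) = b l) := by
  have horth : ∀ i l, 1 ≤ l → l < i → i ≤ m → a l ⬝ᵥ p i = 0 := by
    intro i l hl hli hi
    rw [hp i (by omega) hi, dotProduct_transpose_mulVec,
      abaffian_mulVec_eq_zero_of_lt m a w H hw hrec hl hli (by omega), dotProduct_zero]
  have hdiag : ∀ i, 1 ≤ i → i ≤ m → a i ⬝ᵥ p i ≠ 0 := by
    intro i hi him
    rw [hp i hi him, dotProduct_transpose_mulVec]
    exact hz i hi him
  have hsolve := dotProduct_iterate_eq_of_lowerTriangular m a p x b horth hdiag hx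
  exact ⟨hsolve, fun l hl hlm => hsolve m l hl hlm le_rfl⟩

theorem abs_finite_termination
    (m n : ℕ) (hm : 0 < m) (hmn : m ≤ n)
    (a z w p : ℕ → (Fin n → ℝ))
    (H : ℕ → Matrix (Fin n) (Fin n) ℝ)
    (hH1 : IsUnit (H 1))
    (hz : ∀ i, 1 ≤ i → i ≤ m → z i ⬝ᵥ (H i).mulVec (a i) ≠ 0)
    (hw : ∀ i, 1 ≤ i → i ≤ m → w i ⬝ᵥ (H i).mulVec (a i) ≠ 0)
    (hrec : ∀ i, 1 ≤ i → i ≤ m →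
      H (i + 1) = H i - (w i ⬝ᵥ (H i).mulVec (a i))⁻¹ •
        Matrix.vecMulVec ((H i).mulVec (a i)) (Matrix.vecMul (w i) (H i)))
    (hp : ∀ i, 1 ≤ i → i ≤ m → p i = Matrix.mulVec (H i)ᵀ (z i))
    (b : ℕ → ℝ) (x : ℕ → (Fin n → ℝ))
    (hx : ∀ i, 1 ≤ i → i ≤ m →
      x (i + 1) = x i - ((a i ⬝ᵥ x i - b i) / (a i ⬝ᵥ p i)) • p i) :
    (∀ i l, 1 ≤ l → l ≤ i → i ≤ m → a l ⬝ᵥ x (i + 1) = b l) ∧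
    (∀ l, 1 ≤ l → l ≤ m → a l ⬝ᵥ x (m + 1) = b l) :=
  abs_finite_termination_general m n a z w p H hz hw hrec hp b x hx
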